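/- arXiv:2506.12306 — 3 statements merged into one kernel-verified Lean document; each statement's English description precedes it below -/
import Mathlib

section
/- Let G be a finite group and S ⊆ G with 1 ∈ S. If the bi-Cayley graph BCay(G, S) is isomorphic to the disjoint union of two copies of K_{|G|/2, |G|/2}, then S is a subgroup of G of index 2. -/
/-- The bi-Cayley graph `BCay(G,S)`: vertex set is two copies of `G`
(indexed by `Bool`), with edges `{x₁, (s*x)₂}` for `s ∈ S`, `x ∈ G`. -/
def BCay (G : Type*) [Group G] (S : Set G) : SimpleGraph (G × Bool) where
  Adj v w :=
    (v.2 = false ∧ w.2 = true ∧ w.1 * v.1⁻¹ ∈ S) ∨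
    (v.2 = true ∧ w.2 = false ∧ v.1 * w.1⁻¹ ∈ S)
  symm := by
    constructor
    rintro v w (⟨h1, h2, h3⟩ | ⟨h1, h2, h3⟩)
    · exact Or.inr ⟨h2, h1, h3⟩
    · exact Or.inl ⟨h2, h1, h3⟩
  loopless := by
    constructor
    rintro v (⟨h1, h2, _⟩ | ⟨h1, h2, _⟩) <;> simp [h1] at h2

/-- The disjoint union of two copies of a graph `Γ`. -/
def twoCopies {V : Type*} (Γ : SimpleGraph V) : SimpleGraph (Bool × V) where
  Adj v w := v.1 = w.1 ∧ Γ.Adj v.2 w.2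
  symm := by constructor; rintro v w ⟨h1, h2⟩; exact ⟨h1.symm, h2.symm⟩
  loopless := by constructor; rintro v ⟨_, h⟩; exact Γ.loopless.irrefl _ h

/-!
Every vertex `(x, false)` of `BCay(G,S)` has `|S|` neighbours, so comparing degrees with
`K_{m,m}`, `m = |G|/2`, gives `|S| = m`. Since `1 ∈ S`, each `(x, true)` is adjacent to
`(x, false)`, and `(x, false)` is joined to `(h * x, false)` for every `h ∈ ⟨S⟩`. So the component
of `(1, false)` contains the `2 |⟨S⟩|` vertices `(h, b)`, whereas every component of the target
graph has `2m` vertices. Hence `|⟨S⟩| ≤ m = |S|`, i.e. `S = ⟨S⟩`, a subgroup of order `|G|/2`.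
-/

namespace BCay

variable {G : Type*} [Group G] (S : Set G)

lemma neighborSet_false (x : G) :
    (BCay G S).neighborSet (x, false) = (fun s => (s * x, true)) '' S := by
  ext ⟨y, b⟩
  cases b
  · simp [BCay]
  · simp only [SimpleGraph.mem_neighborSet, BCay, Set.mem_image, Prod.mk.injEq, and_true]
    constructor
    · rintro (⟨-, -, hy⟩ | ⟨h, -⟩)
      · exact ⟨y * x⁻¹, hy, by group⟩
      · cases h
    · rintro ⟨s, hs, rfl⟩
      simpa using hs

lemma card_neighborSet_false (x : G) :
    Nat.card ((BCay G S).neighborSet (x, false)) = Nat.card S := by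
  rw [neighborSet_false]
  exact Nat.card_image_of_injective (fun s t h => mul_right_cancel (Prod.ext_iff.1 h).1) S

variable {S}

lemma adj_true_false_self (hS : (1 : G) ∈ S) (x : G) : (BCay G S).Adj (x, true) (x, false) :=
  Or.inr ⟨rfl, rfl, by simpa using hS⟩

lemma reachable_false_mul (hS : (1 : G) ∈ S) {h : G} (hh : h ∈ Subgroup.closure S) (x : G) :
    (BCay G S).Reachable (x, false) (h * x, false) := by
  induction hh using Subgroup.closure_induction generalizing x with
  | mem s hs =>
    have up : (BCay G S).Adj (x, false) (s * x, true) := Or.inl ⟨rfl, rfl, by simpa using hs⟩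
    exact up.reachable.trans (adj_true_false_self hS _).reachable
  | one => simp
  | mul a b _ _ ha hb => simpa [mul_assoc] using (hb x).trans (ha (b * x))
  | inv a _ ha => simpa using (ha (a⁻¹ * x)).symm

lemma reachable_one_false (hS : (1 : G) ∈ S) {h : G} (hh : h ∈ Subgroup.closure S) (b : Bool) :
    (BCay G S).Reachable (1, false) (h, b) := by
  have hx : (BCay G S).Reachable (1, false) (h, false) := by
    simpa using reachable_false_mul hS hh 1
  cases b
  · exact hx
  · exact hx.trans (adj_true_false_self hS h).reachable.symm

end BCay

namespace twoCopies

variable {V : Type*} {Γ : SimpleGraph V}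

lemma fst_eq_of_reachable {v w : Bool × V} (h : (twoCopies Γ).Reachable v w) : v.1 = w.1 := by
  obtain ⟨p⟩ := h
  induction p with
  | nil => rfl
  | cons h _ ih => exact h.1.trans ih

lemma neighborSet_eq (v : Bool × V) :
    (twoCopies Γ).neighborSet v = Prod.mk v.1 '' Γ.neighborSet v.2 := by
  ext ⟨b, u⟩
  simp [twoCopies, eq_comm, and_comm]

lemma card_neighborSet (v : Bool × V) :
    Nat.card ((twoCopies Γ).neighborSet v) = Nat.card (Γ.neighborSet v.2) := by
  rw [neighborSet_eq]
  exact Nat.card_image_of_injective (Prod.mk_right_injective v.1) _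

end twoCopies

lemma completeBipartiteGraph_card_neighborSet {V : Type*} (u : V ⊕ V) :
    Nat.card ((completeBipartiteGraph V V).neighborSet u) = Nat.card V := by
  rcases u with u | u
  · have : (completeBipartiteGraph V V).neighborSet (.inl u) = Set.range Sum.inr := by
      ext (w | w) <;> simp
    rw [this, Nat.card_range_of_injective Sum.inr_injective]
  · have : (completeBipartiteGraph V V).neighborSet (.inr u) = Set.range Sum.inl := by
      ext (w | w) <;> simp
    rw [this, Nat.card_range_of_injective Sum.inl_injective]

lemma BCay.card_closure_mul_two_le {G V : Type*} [Group G] [Finite V] {S : Set G}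
    {Γ : SimpleGraph V} (hS : (1 : G) ∈ S) (f : BCay G S ≃g twoCopies Γ) :
    Nat.card (Subgroup.closure S) * 2 ≤ Nat.card V := by
  have hfst (p : Subgroup.closure S × Bool) : (f (p.1, p.2)).1 = (f (1, false)).1 :=
    (twoCopies.fst_eq_of_reachable ((reachable_one_false hS p.1.2 p.2).map f.toHom)).symm
  have hinj : Function.Injective fun p : Subgroup.closure S × Bool => (f (p.1, p.2)).2 := by
    intro p q hpq
    have := f.injective (Prod.ext ((hfst p).trans (hfst q).symm) hpq)
    simp only [Prod.mk.injEq] at this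
    exact Prod.ext (Subtype.ext this.1) this.2
  simpa [Nat.card_prod] using Nat.card_le_card_of_injective _ hinj

/-- If `1 ∈ S` and `BCay(G,S)` is isomorphic to the disjoint union of two copies of
`K_{|G|/2,|G|/2}`, then `S` is a subgroup of `G` of index 2. -/
theorem stmt_5 (G : Type*) [Group G] [Fintype G] (hG : Even (Fintype.card G))
    (S : Set G) (hS : (1 : G) ∈ S)
    (h : Nonempty (BCay G S ≃g
      twoCopies (completeBipartiteGraph (Fin (Fintype.card G / 2))
        (Fin (Fintype.card G / 2))))) :
    ∃ H : Subgroup G, H.index = 2 ∧ (H : Set G) = S := by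
  obtain ⟨f⟩ := h
  set m := Fintype.card G / 2
  have hcardG : Nat.card G = 2 * m := by
    rw [Nat.card_eq_fintype_card, Nat.two_mul_div_two_of_even hG]
  have hcardS : Nat.card S = m := by
    rw [← BCay.card_neighborSet_false S 1, Nat.card_congr (f.mapNeighborSet _),
      twoCopies.card_neighborSet, completeBipartiteGraph_card_neighborSet, Nat.card_fin]
  have hcardH : Nat.card (Subgroup.closure S) * 2 ≤ 2 * m := by
    simpa [two_mul] using BCay.card_closure_mul_two_le hS f
  have hclosure : (Subgroup.closure S : Set G) = S := by
    refine (Set.eq_of_subset_of_ncard_le Subgroup.subset_closure ?_ (Set.toFinite _)).symm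
    rw [← Nat.card_coe_set_eq, ← Nat.card_coe_set_eq, hcardS]
    change Nat.card (Subgroup.closure S) ≤ m
    omega
  refine ⟨Subgroup.closure S, ?_, hclosure⟩
  have hindex := (Subgroup.closure S).card_mul_index
  have hcard : Nat.card (Subgroup.closure S) = m :=
    (Nat.card_congr (Equiv.setCongr hclosure)).trans hcardS
  rw [hcard, hcardG] at hindex
  have hm : 0 < m := by
    have := Nat.card_pos (α := G)
    omega
  exact Nat.eq_of_mul_eq_mul_left hm (hindex.trans (mul_comm 2 m))
end

section
/- Let G be a finite abelian group such that any two subgroups of G of the same order are isomorphic. Then every Sylow p-subgroup of G is either elementary abelian or cyclic. -/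
/-! If a Sylow `p`-subgroup is neither cyclic nor elementary abelian, it has an element of
order `p ^ 2`, hence a cyclic subgroup of order `p ^ 2`. Being non-cyclic, it also has (by the
structure theorem) two elements `a`, `b` of order `p` with `b ∉ ⟨a⟩`; they generate a subgroup
of order `p ^ 2` and exponent `p`, which is not cyclic. So two subgroups of order `p ^ 2` are
not isomorphic. -/

open Subgroup
open scoped Pointwise

theorem exists_prime_orderOf_multiplicative_zmod {n : ℕ} (hn : 1 < n) :
    ∃ g : Multiplicative (ZMod n), (orderOf g).Prime := by
  have : NeZero n := ⟨by omega⟩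
  have hq : Fact n.minFac.Prime := ⟨Nat.minFac_prime hn.ne'⟩
  obtain ⟨g, hg⟩ := exists_prime_orderOf_dvd_card' (G := Multiplicative (ZMod n)) n.minFac
    (by rw [Nat.card_congr Multiplicative.toAdd, Nat.card_zmod]; exact Nat.minFac_dvd n)
  exact ⟨g, hg ▸ hq.out⟩

theorem isCyclic_pi_of_subsingleton {ι : Type*} [Subsingleton ι] (M : ι → Type*)
    [∀ i, Group (M i)] [∀ i, IsCyclic (M i)] : IsCyclic (∀ i, M i) := by
  rcases isEmpty_or_nonempty ι with _ | ⟨⟨i⟩⟩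
  · exact isCyclic_of_subsingleton
  · exact (@MulEquiv.piUnique _ M _ (uniqueOfSubsingleton i)).symm.isCyclic.mp inferInstance

theorem exists_prime_orderOf_notMem_zpowers {Q : Type*} [CommGroup Q] [Finite Q]
    (hQ : ¬IsCyclic Q) :
    ∃ a b : Q, (orderOf a).Prime ∧ (orderOf b).Prime ∧ b ∉ zpowers a := by
  classical
  obtain ⟨ι, _, n, hn, ⟨e⟩⟩ := CommGroup.equiv_prod_multiplicative_zmod_of_finite Q
  obtain ⟨i, j, hij⟩ : ∃ i j : ι, i ≠ j := by
    by_contra! hι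
    have : Subsingleton ι := ⟨hι⟩
    exact hQ (e.isCyclic.mpr (isCyclic_pi_of_subsingleton _))
  obtain ⟨g, hg⟩ := exists_prime_orderOf_multiplicative_zmod (hn i)
  obtain ⟨h, hh⟩ := exists_prime_orderOf_multiplicative_zmod (hn j)
  refine ⟨e.symm (Pi.mulSingle i g), e.symm (Pi.mulSingle j h), ?_, ?_, ?_⟩
  · rwa [MulEquiv.orderOf_eq, orderOf_piMulSingle]
  · rwa [MulEquiv.orderOf_eq, orderOf_piMulSingle]
  rintro ⟨z, hz⟩
  have hj := congrFun (congrArg e hz) j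
  simp only [map_zpow, MulEquiv.apply_symm_apply, Pi.pow_apply, Pi.mulSingle_eq_of_ne hij.symm,
    one_zpow, Pi.mulSingle_eq_same] at hj
  rw [← hj, orderOf_one] at hh
  exact Nat.not_prime_one hh

theorem IsPGroup.orderOf_eq_of_prime {p : ℕ} [Fact p.Prime] {Q : Type*} [Group Q]
    (hQ : IsPGroup p Q) {x : Q} (hx : (orderOf x).Prime) : orderOf x = p := by
  obtain ⟨k, hk⟩ := IsPGroup.iff_orderOf.mp hQ x
  exact (Nat.prime_dvd_prime_iff_eq hx Fact.out).mp (hx.dvd_of_dvd_pow hk.dvd)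

section
variable {G : Type*} [CommGroup G] {p : ℕ}

theorem exponent_zpowers_sup_zpowers_dvd {a b : G} (ha : a ^ p = 1) (hb : b ^ p = 1) :
    Monoid.exponent (zpowers a ⊔ zpowers b : Subgroup G) ∣ p := by
  have hker : zpowers a ⊔ zpowers b ≤ (powMonoidHom p : G →* G).ker :=
    sup_le (zpowers_le.mpr ha) (zpowers_le.mpr hb)
  exact Monoid.exponent_dvd_of_forall_pow_eq_one fun g ↦ Subtype.ext (hker g.2)

variable [Finite G]

theorem card_zpowers_sup_zpowers (hp : p.Prime) {a b : G} (ha : orderOf a = p)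
    (hb : orderOf b = p) (hab : b ∉ zpowers a) :
    Nat.card (zpowers a ⊔ zpowers b : Subgroup G) = p ^ 2 := by
  have := Fact.mk hp
  set E := zpowers a ⊔ zpowers b
  have hexp : Monoid.exponent E ∣ p ^ 1 := (pow_one p).symm ▸
    exponent_zpowers_sup_zpowers_dvd (ha ▸ pow_orderOf_eq_one a) (hb ▸ pow_orderOf_eq_one b)
  obtain ⟨k, hk⟩ := IsPGroup.iff_card.mp (IsPGroup.of_exponent_dvd_pow hexp)
  have hle : Nat.card E ≤ p ^ 2 :=
    calc Nat.card E = Nat.card ((zpowers a : Set G) * (zpowers b : Set G)) := by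
          rw [← mul_normal]; rfl
      _ ≤ Nat.card (zpowers a) * Nat.card (zpowers b) := Set.natCard_mul_le
      _ = p ^ 2 := by rw [Nat.card_zpowers, Nat.card_zpowers, ha, hb, sq]
  have hlt : p < Nat.card E := by
    have hleE : zpowers a ≤ E := le_sup_left
    have hcard : Nat.card (zpowers a) = p := by rw [Nat.card_zpowers, ha]
    refine (hcard ▸ card_le_of_le hleE).lt_of_ne fun heq ↦ hab ?_
    rw [eq_of_le_of_card_ge hleE (by rw [← heq, hcard])]
    exact mem_sup_right (mem_zpowers b)
  rw [hk] at hle hlt ⊢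
  rw [(Nat.pow_le_pow_iff_right hp.one_lt).mp hle |>.antisymm
    ((Nat.pow_lt_pow_iff_right hp.one_lt).mp (by rwa [pow_one]))]

theorem not_isCyclic_zpowers_sup_zpowers (hp : p.Prime) {a b : G} (ha : orderOf a = p)
    (hb : orderOf b = p) (hab : b ∉ zpowers a) :
    ¬IsCyclic (zpowers a ⊔ zpowers b : Subgroup G) := by
  intro hcyc
  have hdvd : p ^ 2 ∣ p ^ 1 := by
    rw [pow_one, ← card_zpowers_sup_zpowers hp ha hb hab, ← hcyc.exponent_eq_card]
    exact exponent_zpowers_sup_zpowers_dvd (ha ▸ pow_orderOf_eq_one a)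
      (hb ▸ pow_orderOf_eq_one b)
  have := (Nat.pow_dvd_pow_iff_le_right hp.one_lt).mp hdvd
  omega

end

theorem IsPGroup.exists_orderOf_eq_sq {p : ℕ} [Fact p.Prime] {Q : Type*} [Group Q]
    (hQ : IsPGroup p Q) {x : Q} (hx : x ≠ 1) (hxp : orderOf x ≠ p) :
    ∃ y : Q, orderOf y = p ^ 2 := by
  obtain ⟨m, hm⟩ := IsPGroup.iff_orderOf.mp hQ x
  have hm0 : m ≠ 0 := by rintro rfl; exact hx (orderOf_eq_one_iff.mp hm)
  have hm1 : m ≠ 1 := by rintro rfl; exact hxp (hm.trans (pow_one p))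
  have hdvd : p ^ 2 ∣ orderOf x := hm ▸ pow_dvd_pow p (by omega)
  exact ⟨_, orderOf_pow_orderOf_div (hm ▸ pow_ne_zero m (Fact.out : p.Prime).ne_zero) hdvd⟩

/-- If any two subgroups of a finite abelian group `G` of the same order are
isomorphic, then every Sylow `p`-subgroup of `G` is elementary abelian or cyclic. -/
theorem stmt_9 (G : Type*) [CommGroup G] [Fintype G]
    (h : ∀ H K : Subgroup G, Nat.card H = Nat.card K → Nonempty (H ≃* K)) :
    ∀ (p : ℕ), p.Prime → ∀ P : Sylow p G,
      (∀ x : (P : Subgroup G), x ≠ 1 → orderOf x = p) ∨ IsCyclic (P : Subgroup G) := by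
  intro p hp P
  have := Fact.mk hp
  refine or_iff_not_imp_right.mpr fun hP x hx ↦ by_contra fun hxp ↦ ?_
  obtain ⟨y, hy⟩ := P.isPGroup'.exists_orderOf_eq_sq hx hxp
  obtain ⟨a, b, ha, hb, hab⟩ := exists_prime_orderOf_notMem_zpowers hP
  have hab' : (b : G) ∉ zpowers (a : G) := fun ⟨z, hz⟩ ↦ hab ⟨z, Subtype.ext hz⟩
  have ha' : orderOf (a : G) = p := by rw [orderOf_coe, P.isPGroup'.orderOf_eq_of_prime ha]
  have hb' : orderOf (b : G) = p := by rw [orderOf_coe, P.isPGroup'.orderOf_eq_of_prime hb]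
  obtain ⟨e⟩ := h (zpowers (y : G)) (zpowers (a : G) ⊔ zpowers (b : G)) (by
    rw [Nat.card_zpowers, orderOf_coe, hy, card_zpowers_sup_zpowers hp ha' hb' hab'])
  exact not_isCyclic_zpowers_sup_zpowers hp ha' hb' hab' (e.isCyclic.mp inferInstance)
end

section
/- Let G be a finite group such that for any two elements s, t ∈ G of the same order, the bi-Cayley graphs BCay(G, {1,s}) and BCay(G, {1,t}) being isomorphic implies there exist g ∈ G and α ∈ Aut(G) with {1,t} = g⁻¹·α({1,s}) or {1,t} = α({1,s}⁻¹)·g. Then G is an FIF-group: for any x, y ∈ G of the same order there is α ∈ Aut(G) with α(x) = y or α(x) = y⁻¹. -/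
open Pointwise

/-!
If `s` and `t` have the same order, left multiplication by `s` and by `t` are conjugate
permutations of `G`: both make `G` a free `⟨s⟩`- resp. `⟨t⟩`-set whose orbits are the right
cosets, there are equally many of them, and `⟨s⟩ ≅ ⟨t⟩` via `s ↦ t`. Matching offsets inside the
cosets and the cosets themselves gives a bijection `f` with `f (s * g) = t * f g`, and
`(x, i) ↦ (f x, i)` is an isomorphism `BCay(G, {1, s}) ≅ BCay(G, {1, t})`. The hypothesis then
yields `{1, t} = g⁻¹ • α {1, s}` or `{1, t} = α {1, s}⁻¹ • g`, and whichever element of the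
right-hand side equals `1` pins down `g`, leaving `α s = t` or `α s = t⁻¹`.
-/

open Subgroup QuotientGroup

section RightCosets

variable {G : Type*} [Group G] {H K : Subgroup G}

theorem mk_rightRel_coe_mul (h : H) (g : G) :
    Quotient.mk (rightRel H) (h * g) = Quotient.mk (rightRel H) g :=
  Quotient.sound (rightRel_apply.mpr (by simp))

noncomputable def rightCosetOffset (H : Subgroup G) (g : G) : H :=
  ⟨g * (Quotient.mk (rightRel H) g).out⁻¹, by
    simpa using rightRel_apply.mp (Quotient.exact (Quotient.out_eq (Quotient.mk (rightRel H) g)))⟩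

theorem rightCosetOffset_mul_out (g : G) :
    (rightCosetOffset H g : G) * (Quotient.mk (rightRel H) g).out = g := by
  simp [rightCosetOffset]

theorem rightCosetOffset_mul (h : H) (g : G) :
    rightCosetOffset H (h * g) = h * rightCosetOffset H g := by
  ext
  simp [rightCosetOffset, mk_rightRel_coe_mul, mul_assoc]

variable (φ : H ≃* K) (σ : Quotient (rightRel H) ≃ Quotient (rightRel K))

noncomputable def mapRightCosets (g : G) : G :=
  φ (rightCosetOffset H g) * (σ (Quotient.mk (rightRel H) g)).out

theorem mk_mapRightCosets (g : G) :
    Quotient.mk (rightRel K) (mapRightCosets φ σ g) = σ (Quotient.mk (rightRel H) g) := by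
  rw [mapRightCosets, mk_rightRel_coe_mul, Quotient.out_eq]

theorem rightCosetOffset_mapRightCosets (g : G) :
    rightCosetOffset K (mapRightCosets φ σ g) = φ (rightCosetOffset H g) := by
  ext
  rw [rightCosetOffset, Subgroup.coe_mk, mk_mapRightCosets, mapRightCosets, mul_inv_cancel_right]

theorem mapRightCosets_symm_mapRightCosets (g : G) :
    mapRightCosets φ.symm σ.symm (mapRightCosets φ σ g) = g := by
  rw [mapRightCosets, rightCosetOffset_mapRightCosets, mk_mapRightCosets,
    MulEquiv.symm_apply_apply, Equiv.symm_apply_apply, rightCosetOffset_mul_out]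

theorem mapRightCosets_mul (h : H) (g : G) :
    mapRightCosets φ σ (h * g) = φ h * mapRightCosets φ σ g := by
  simp [mapRightCosets, rightCosetOffset_mul, mk_rightRel_coe_mul, mul_assoc]

noncomputable def equivOfRightCosets : G ≃ G where
  toFun := mapRightCosets φ σ
  invFun := mapRightCosets φ.symm σ.symm
  left_inv := mapRightCosets_symm_mapRightCosets φ σ
  right_inv := mapRightCosets_symm_mapRightCosets φ.symm σ.symm

theorem exists_equiv_map_mul [Finite G] :
    ∃ f : G ≃ G, ∀ (h : H) (g : G), f (h * g) = φ h * f g := by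
  have hindex : H.index = K.index := by
    refine Nat.eq_of_mul_eq_mul_right (Nat.card_pos (α := H)) ?_
    rw [index_mul_card, Nat.card_congr φ.toEquiv, index_mul_card]
  obtain ⟨τ⟩ : Nonempty (Quotient (rightRel H) ≃ Quotient (rightRel K)) := by
    rw [← Finite.card_eq, Nat.card_congr (quotientRightRelEquivQuotientLeftRel H),
      Nat.card_congr (quotientRightRelEquivQuotientLeftRel K)]
    exact hindex
  exact ⟨equivOfRightCosets φ τ, mapRightCosets_mul φ τ⟩

end RightCosets

section ZPowers

variable {G : Type*} [Group G] {s t : G}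

theorem mem_zpowers_mk_self (s : G) (x : zpowers s) : x ∈ zpowers ⟨s, mem_zpowers s⟩ := by
  obtain ⟨_, k, rfl⟩ := x
  exact ⟨k, rfl⟩

noncomputable def zpowersMulEquiv (h : orderOf s = orderOf t) : zpowers s ≃* zpowers t :=
  (zmodMulEquivOfGenerator (mem_zpowers_mk_self s) (Nat.card_zpowers s)).symm.trans
    (zmodMulEquivOfGenerator (mem_zpowers_mk_self t) ((Nat.card_zpowers t).trans h.symm))

theorem zpowersMulEquiv_mk_self (h : orderOf s = orderOf t) :
    zpowersMulEquiv h ⟨s, mem_zpowers s⟩ = ⟨t, mem_zpowers t⟩ := by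
  simp [zpowersMulEquiv]

theorem exists_equiv_map_mul_left_of_orderOf_eq [Finite G] (h : orderOf s = orderOf t) :
    ∃ f : G ≃ G, ∀ g, f (s * g) = t * f g := by
  obtain ⟨f, hf⟩ := exists_equiv_map_mul (zpowersMulEquiv h)
  exact ⟨f, fun g => by simpa [zpowersMulEquiv_mk_self] using hf ⟨s, mem_zpowers s⟩ g⟩

end ZPowers

namespace BCay

variable {G : Type*} [Group G]

def isoOfEquiv {S T : Set G} (f : G ≃ G) (hf : ∀ a b, f b * (f a)⁻¹ ∈ T ↔ b * a⁻¹ ∈ S) :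
    BCay G S ≃g BCay G T where
  toEquiv := f.prodCongr (Equiv.refl Bool)
  map_rel_iff' := by
    rintro ⟨a, i⟩ ⟨b, j⟩
    simp only [BCay, Equiv.prodCongr_apply, Prod.map, Equiv.coe_refl, id, hf]

theorem nonempty_iso_pair_of_orderOf_eq [Finite G] {s t : G} (h : orderOf s = orderOf t) :
    Nonempty (BCay G {1, s} ≃g BCay G {1, t}) := by
  obtain ⟨f, hf⟩ := exists_equiv_map_mul_left_of_orderOf_eq h
  refine ⟨isoOfEquiv f fun a b => ?_⟩
  simp only [Set.mem_insert_iff, Set.mem_singleton_iff, mul_inv_eq_iff_eq_mul, one_mul,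
    ← hf, f.injective.eq_iff]

end BCay

/-- If for any two elements `s, t` of the same order, an isomorphism
`BCay(G,{1,s}) ≅ BCay(G,{1,t})` implies `{1,t} = g⁻¹·α({1,s})` or
`{1,t} = α({1,s}⁻¹)·g` for some `g ∈ G`, `α ∈ Aut(G)`, then `G` is an FIF-group. -/
theorem stmt_11 (G : Type*) [Group G] [Fintype G]
    (h : ∀ s t : G, orderOf s = orderOf t →
      Nonempty (BCay G {1, s} ≃g BCay G {1, t}) →
      ∃ (g : G) (α : G ≃* G),
        ({1, t} : Set G) = (fun u => g⁻¹ * α u) '' {1, s} ∨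
        ({1, t} : Set G) = (fun u => α u * g) '' ({1, s} : Set G)⁻¹) :
    ∀ x y : G, orderOf x = orderOf y →
      ∃ α : G ≃* G, α x = y ∨ α x = y⁻¹ := by
  intro x y hxy
  obtain ⟨g, α, hc | hc⟩ := h x y hxy (BCay.nonempty_iso_pair_of_orderOf_eq hxy) <;>
    refine ⟨α, ?_⟩
  · rw [Set.image_pair, map_one, mul_one, Set.pair_eq_pair_iff] at hc
    rcases hc with ⟨hg, hy⟩ | ⟨hgx, hy⟩
    · left
      rw [hy, ← hg, one_mul]
    · right
      rw [hy, inv_inv]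
      exact (inv_mul_eq_one.mp hgx.symm).symm
  · rw [Set.inv_insert, Set.inv_singleton, inv_one, Set.image_pair, map_one, one_mul, map_inv,
      Set.pair_eq_pair_iff] at hc
    rcases hc with ⟨hg, hy⟩ | ⟨hgx, hy⟩
    · right
      rw [hy, ← hg, mul_one, inv_inv]
    · left
      exact (inv_mul_eq_one.mp hgx.symm).trans hy.symm
end
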